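/- arXiv:2302.00870 — 4 statements merged into one kernel-verified Lean document; each statement's English description precedes it below -/
import Mathlib

section
/- Let L/K be a cyclic Galois extension of degree n ≥ 3 of fields of characteristic 0, generated by an element u with uⁿ = q ∈ K, and let σ be a generator of Gal(L/K) with σ(u) = ζ·u for ζ a primitive n-th root of unity in K. Let x = c₀ + c₁u + c₂u² + ··· + c_{n-1}u^{n-1} with cᵢ ∈ K, c₁ ≠ 0, and suppose c₁, ..., c_{n-1} form a geometric sequence. Then there exist a, b, c, d ∈ K with ad − bc ≠ 0 such that σ(x) = (a·x + b)/(c·x + d). That is, σ(x) is a Möbius transformation of x over K. -/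
/-!
Write `r = c₂ / c₁`. Because `c₁, …, c_{n-1}` is geometric with ratio `r`, multiplying `x` by
`r u - 1` telescopes: `x (r u - 1) = A + B u` with `A = r c_{n-1} q - c₀` and `B = r c₀ - c₁`.
So `x` is the image of `u` under the Möbius map with matrix `[[B, A], [r, -1]]`, which is
invertible because neither `x` nor `u` lies in `K`. As `σ u = ζ u`, conjugating `u ↦ ζ u` by this
map expresses `σ x` as a Möbius transformation of `x`, of determinant `ζ (r A + B)²`.
-/

open Finset

theorem sum_mul_mul_sub_one_of_geometric {R : Type*} [CommRing R] {c : ℕ → R} {r u : R} {n : ℕ}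
    (hn : 2 ≤ n) (hgeo : ∀ i, 1 ≤ i → i ≤ n - 2 → c (i + 1) = r * c i) :
    (∑ i ∈ range n, c i * u ^ i) * (r * u - 1) =
      r * c (n - 1) * u ^ n - c 0 + (r * c 0 - c 1) * u := by
  induction n, hn using Nat.le_induction with
  | base => simp only [sum_range_succ, sum_range_zero]; ring
  | succ m hm ih =>
    have hcm : c m = r * c (m - 1) := by
      obtain ⟨k, rfl⟩ : ∃ k, m = k + 1 := ⟨m - 1, by omega⟩
      exact hgeo k (by omega) (by omega)
    rw [sum_range_succ, add_mul, ih fun i h1 h2 => hgeo i h1 (by omega), Nat.add_sub_cancel, hcm]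
    ring

section

variable {K L : Type*} [Field K] [Field L] [Algebra K L]

theorem algebraMap_mul_add_algebraMap_ne_zero {x : L} (hx : x ∉ (algebraMap K L).range)
    {a b : K} (hab : a ≠ 0 ∨ b ≠ 0) : algebraMap K L a * x + algebraMap K L b ≠ 0 := by
  intro h
  by_cases ha : a = 0
  · simp_all
  · refine hx ⟨-b / a, ?_⟩
    rw [map_div₀, map_neg, div_eq_iff (by simpa using ha)]
    linear_combination -h

theorem sum_pow_notMem_range_algebraMap {u : L} (hdeg : 2 ≤ (minpoly K u).natDegree)
    {c : ℕ → K} (hc1 : c 1 ≠ 0) :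
    ∑ i ∈ range (minpoly K u).natDegree, algebraMap K L (c i) * u ^ i ∉
      (algebraMap K L).range := by
  rintro ⟨k, hk⟩
  refine hc1 ?_
  have hcoeff := Fintype.linearIndependent_iff.mp (linearIndependent_pow u)
    (fun i => c i - if (i : ℕ) = 0 then k else 0) ?_ ⟨1, hdeg⟩
  · simpa using hcoeff
  · rw [Fin.sum_univ_eq_sum_range (fun i => (c i - if i = 0 then k else 0) • u ^ i),
      sum_congr rfl fun i _ => by rw [sub_smul, ite_smul, zero_smul], sum_sub_distrib, sum_ite_eq',
      if_pos (mem_range.2 (by omega)), pow_zero, Algebra.smul_def, mul_one, hk]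
    simp only [Algebra.smul_def, sub_self]

theorem exists_mobius_of_mul_sub_one_eq (σ : L →ₐ[K] L) {x u : L} {ζ r A B : K}
    (hζ0 : ζ ≠ 0) (hζ1 : ζ ≠ 1) (hσu : σ u = algebraMap K L ζ * u)
    (hxu : x * (algebraMap K L r * u - 1) = algebraMap K L A + algebraMap K L B * u)
    (hx : x ∉ (algebraMap K L).range) (hu : u ∉ (algebraMap K L).range) :
    ∃ a b cc d : K, a * d - b * cc ≠ 0 ∧
      algebraMap K L cc * x + algebraMap K L d ≠ 0 ∧
      σ x = (algebraMap K L a * x + algebraMap K L b) /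
        (algebraMap K L cc * x + algebraMap K L d) := by
  have hdet : r * A + B ≠ 0 := by
    intro h
    have hfac : (algebraMap K L 1 * x + algebraMap K L A) * (algebraMap K L r * u - 1) = 0 := by
      rw [eq_neg_of_add_eq_zero_right h] at hxu
      simp only [map_one, map_neg, map_mul] at hxu ⊢
      linear_combination hxu
    rcases mul_eq_zero.mp hfac with hxA | hru
    · exact algebraMap_mul_add_algebraMap_ne_zero hx (Or.inl one_ne_zero) hxA
    · refine hu ⟨r⁻¹, ?_⟩
      rw [map_inv₀, inv_eq_of_mul_eq_one_right (sub_eq_zero.mp hru)]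
  have hden : algebraMap K L (r * (ζ - 1)) * x + algebraMap K L (r * ζ * A + B) ≠ 0 := by
    refine algebraMap_mul_add_algebraMap_ne_zero hx ?_
    by_cases hr : r = 0
    · right
      simpa [hr] using hdet
    · exact Or.inl (mul_ne_zero hr (sub_ne_zero.mpr hζ1))
  refine ⟨r * A + ζ * B, (ζ - 1) * A * B, r * (ζ - 1), r * ζ * A + B, ?_, hden, ?_⟩
  · rw [show (r * A + ζ * B) * (r * ζ * A + B) - (ζ - 1) * A * B * (r * (ζ - 1)) =
      ζ * (r * A + B) ^ 2 by ring]
    exact mul_ne_zero hζ0 (pow_ne_zero 2 hdet)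
  · have hσxu := congrArg σ hxu
    simp only [map_mul, map_add, map_sub, map_one, AlgHom.commutes, hσu] at hσxu
    rw [eq_div_iff hden]
    simp only [map_mul, map_add, map_sub, map_one]
    -- eliminate `u` between `hxu` and its image under `σ`
    linear_combination (-(algebraMap K L ζ * algebraMap K L r * σ x
        - algebraMap K L ζ * algebraMap K L B)) * hxu
      + (algebraMap K L r * x - algebraMap K L B) * hσxu

end

theorem stmt1_general {K L : Type*} [Field K] [Field L] [Algebra K L]
    (n : ℕ) (hn : 3 ≤ n) (ζ : K) (hζ : IsPrimitiveRoot ζ n)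
    (q : K) (u : L) (hu : u ^ n = algebraMap K L q)
    (hgen : IntermediateField.adjoin K {u} = ⊤)
    (hdim : Module.finrank K L = n)
    (σ : L ≃ₐ[K] L) (hσu : σ u = algebraMap K L ζ * u)
    (c : ℕ → K) (hc1 : c 1 ≠ 0)
    (hgeo : ∀ i, 1 ≤ i → i ≤ n - 2 → c (i + 1) = (c 2 / c 1) * c i)
    (x : L) (hx : x = ∑ i ∈ Finset.range n, algebraMap K L (c i) * u ^ i) :
    ∃ a b cc d : K, a * d - b * cc ≠ 0 ∧
      algebraMap K L cc * x + algebraMap K L d ≠ 0 ∧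
      σ x = (algebraMap K L a * x + algebraMap K L b) /
        (algebraMap K L cc * x + algebraMap K L d) := by
  have : FiniteDimensional K L := Module.finite_of_finrank_pos (by omega)
  have hint : IsIntegral K u := .of_finite K u
  have hdeg : (minpoly K u).natDegree = n := by
    rw [← IntermediateField.adjoin.finrank hint, hgen, IntermediateField.finrank_top', hdim]
  have hxu : x * (algebraMap K L (c 2 / c 1) * u - 1) =
      algebraMap K L (c 2 / c 1 * c (n - 1) * q - c 0) +
        algebraMap K L (c 2 / c 1 * c 0 - c 1) * u := by
    rw [hx, sum_mul_mul_sub_one_of_geometric (by omega)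
      fun i h1 h2 => by rw [hgeo i h1 h2, map_mul], hu]
    simp only [map_sub, map_mul]
  refine exists_mobius_of_mul_sub_one_eq (σ : L →ₐ[K] L) (hζ.ne_zero (by omega))
    (hζ.ne_one (by omega)) hσu hxu ?_ ?_
  · rw [hx, ← hdeg]
    exact sum_pow_notMem_range_algebraMap (by omega) hc1
  · exact (minpoly.two_le_natDegree_iff hint).mp (by omega)

/-- Proposition 2 of the paper. If `L/K` is a cyclic Galois extension of
degree `n ≥ 3` generated by `u` with `uⁿ = q ∈ K`, `σ` a generator of the Galois group with
`σ u = ζ u` for `ζ` a primitive `n`-th root of unity in `K`, and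
`x = c₀ + c₁ u + ⋯ + c_{n-1} u^{n-1}` with `c₁, …, c_{n-1}` a geometric sequence, then `σ x`
is a Möbius transformation of `x` over `K`. -/
theorem stmt1 {K L : Type*} [Field K] [Field L] [Algebra K L] [CharZero K]
    [IsGalois K L]
    (n : ℕ) (hn : 3 ≤ n) (ζ : K) (hζ : IsPrimitiveRoot ζ n)
    (q : K) (u : L) (hu : u ^ n = algebraMap K L q)
    (hgen : IntermediateField.adjoin K {u} = ⊤)
    (hdim : Module.finrank K L = n)
    (σ : L ≃ₐ[K] L) (hσu : σ u = algebraMap K L ζ * u)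
    (hσgen : ∀ τ : L ≃ₐ[K] L, τ ∈ Subgroup.zpowers σ)
    (c : ℕ → K) (hc1 : c 1 ≠ 0)
    (hgeo : ∀ i, 1 ≤ i → i ≤ n - 2 → c (i + 1) = (c 2 / c 1) * c i)
    (x : L) (hx : x = ∑ i ∈ Finset.range n, algebraMap K L (c i) * u ^ i) :
    ∃ a b cc d : K, a * d - b * cc ≠ 0 ∧
      algebraMap K L cc * x + algebraMap K L d ≠ 0 ∧
      σ x = (algebraMap K L a * x + algebraMap K L b) /
        (algebraMap K L cc * x + algebraMap K L d) :=
  stmt1_general n hn ζ hζ q u hu hgen hdim σ hσu c hc1 hgeo x hx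
end

section
/- Let L/K be a cyclic extension of degree 3 in characteristic 0, with K containing a primitive cube root of unity ω, L = K(u), u³ = q ∈ K, and σ the K-automorphism with σ(u) = ωu. Then for any x = c₀ + c₁u + c₂u² with c₀, c₁, c₂ ∈ K and (c₁, c₂) ≠ (0,0), there exist a, b, c, d ∈ K with ad − bc ≠ 0 such that σ(x) = (a·x + b)/(c·x + d). -/
/-- the `n = 3` case of the main theorem. For a degree-3 Kummer extension
`L = K(u)`, `u³ = q`, with `σ(u) = ω u` for `ω ∈ K` a primitive cube root of unity, the image
`σ x` of any `x = c₀ + c₁ u + c₂ u²` with `(c₁, c₂) ≠ (0,0)` is a Möbius transformation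
of `x` over `K`. -/
theorem stmt2 {K L : Type*} [Field K] [Field L] [Algebra K L] [CharZero K]
    (ω : K) (hω : IsPrimitiveRoot ω 3)
    (q : K) (u : L) (hu : u ^ 3 = algebraMap K L q)
    (hgen : IntermediateField.adjoin K {u} = ⊤)
    (hdim : Module.finrank K L = 3)
    (σ : L ≃ₐ[K] L) (hσu : σ u = algebraMap K L ω * u)
    (c₀ c₁ c₂ : K) (hc : ¬(c₁ = 0 ∧ c₂ = 0))
    (x : L)
    (hx : x = algebraMap K L c₀ + algebraMap K L c₁ * u + algebraMap K L c₂ * u ^ 2) :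
    ∃ a b c d : K, a * d - b * c ≠ 0 ∧
      algebraMap K L c * x + algebraMap K L d ≠ 0 ∧
      σ x = (algebraMap K L a * x + algebraMap K L b) /
        (algebraMap K L c * x + algebraMap K L d) := by
  have hωne1 : ω ≠ 1 := hω.ne_one (by norm_num)
  have hωne0 : ω ≠ 0 := hω.ne_zero (by norm_num)
  have hω3 : ω ^ 3 = 1 := hω.pow_eq_one
  have hωrel : ω ^ 2 + ω + 1 = 0 := by
    have h0 : (ω - 1) * (ω ^ 2 + ω + 1) = 0 := by linear_combination hω3
    rcases mul_eq_zero.mp h0 with h | h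
    · exact absurd (sub_eq_zero.mp h) hωne1
    · exact h
  -- degree of the minimal polynomial of u is 3
  have hint : IsIntegral K u := by
    refine IsIntegral.of_pow (n := 3) (by norm_num) ?_
    rw [hu]; exact isIntegral_algebraMap
  have hdeg : (minpoly K u).natDegree = 3 := by
    rw [← IntermediateField.adjoin.finrank hint, hgen, IntermediateField.finrank_top', hdim]
  -- linear independence of 1, u, u²
  have hli : ∀ α β γ : K, algebraMap K L α + algebraMap K L β * u + algebraMap K L γ * u ^ 2 = 0
      → α = 0 ∧ β = 0 ∧ γ = 0 := by
    intro α β γ h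
    have hLI := linearIndependent_pow (K := K) u
    rw [hdeg] at hLI
    have := Fintype.linearIndependent_iff.mp hLI ![α, β, γ] ?_
    · exact ⟨this 0, this 1, this 2⟩
    · show (∑ i : Fin 3, ![α, β, γ] i • u ^ (i : ℕ)) = 0
      rw [Fin.sum_univ_three]
      simpa [Algebra.smul_def] using h
  have hq0 : q ≠ 0 := by
    intro h
    have hu0 : u = 0 := by
      have := hu
      rw [h, map_zero] at this
      exact pow_eq_zero_iff (by norm_num) |>.mp this
    have := (hli 0 1 0 (by simp [hu0])).2.1
    exact one_ne_zero this
  -- image of x under σ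
  have hσx : σ x = algebraMap K L c₀ + algebraMap K L ω * algebraMap K L c₁ * u
      + algebraMap K L ω ^ 2 * (algebraMap K L c₂ * u ^ 2) := by
    rw [hx]
    simp only [map_add, map_mul, map_pow, AlgEquiv.commutes, hσu]
    ring
  have homega : ω ^ 2 - ω ≠ 0 := by
    intro hh
    have h0 : ω * (ω - 1) = 0 := by linear_combination hh
    rcases mul_eq_zero.mp h0 with h | h
    exacts [hωne0 h, hωne1 (sub_eq_zero.mp h)]
  -- the Möbius coefficients
  set A := ω * (q * c₂ ^ 2 - c₀ * c₁) * c₂ - ω ^ 2 * (c₁ ^ 2 - c₀ * c₂) * c₁ with hA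
  set Cc := (ω ^ 2 - ω) * (c₁ * c₂) with hCc
  set D := ω ^ 2 * (q * c₂ ^ 2 - c₀ * c₁) * c₂ - ω * (c₁ ^ 2 - c₀ * c₂) * c₁ with hD
  set B := Cc * (c₀ ^ 2 - q * c₁ * c₂) + D * c₀ - A * c₀ with hB
  -- the key algebraic identity
  have hmain : (algebraMap K L Cc * x + algebraMap K L D) * σ x
      = algebraMap K L A * x + algebraMap K L B := by
    have hW : (algebraMap K L ω) ^ 2 + algebraMap K L ω + 1 = (0 : L) := by
      have h0 := congrArg (algebraMap K L) hωrel
      simpa using h0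
    rw [hσx, hx, hB, hA, hCc, hD]
    simp only [map_add, map_mul, map_sub, map_pow, map_one]
    set W := algebraMap K L ω
    set Q := algebraMap K L q
    set K0 := algebraMap K L c₀
    set K1 := algebraMap K L c₁
    set K2 := algebraMap K L c₂
    linear_combination (-W ^ 2 * K1 ^ 2 * K2 ^ 2 - W ^ 3 * K1 * K2 ^ 3 * u
        + W ^ 4 * K1 * K2 ^ 3 * u + W ^ 4 * K1 ^ 2 * K2 ^ 2) * hu
      + ((W ^ 2 - W) * Q * (K2 ^ 4 * u ^ 2 + K1 * K2 ^ 3 * u + K1 ^ 2 * K2 ^ 2)) * hW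
  -- the denominator is nonzero
  have hden : algebraMap K L Cc * x + algebraMap K L D ≠ 0 := by
    intro h
    rw [hx] at h
    have h' : algebraMap K L (Cc * c₀ + D) + algebraMap K L (Cc * c₁) * u
        + algebraMap K L (Cc * c₂) * u ^ 2 = 0 := by
      simp only [map_add, map_mul]
      linear_combination h
    obtain ⟨h0, h1, h2⟩ := hli _ _ _ h'
    by_cases hc1 : c₁ = 0
    · have hc2 : c₂ ≠ 0 := fun hh => hc ⟨hc1, hh⟩
      rw [hCc, hD, hc1] at h0
      have h3 : ω ^ 2 * q * c₂ ^ 3 = 0 := by linear_combination h0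
      simp [mul_eq_zero, hωne0, hq0, hc2, pow_eq_zero_iff] at h3
    · by_cases hc2 : c₂ = 0
      · rw [hCc, hD, hc2] at h0
        have h3 : ω * c₁ ^ 3 = 0 := by linear_combination -h0
        simp [mul_eq_zero, hωne0, hc1, pow_eq_zero_iff] at h3
      · rw [hCc] at h1
        simp [mul_eq_zero, homega, hc1, hc2] at h1
  -- the determinant is nonzero
  have hdet : A * D - B * Cc ≠ 0 := by
    intro h
    by_cases hc1 : c₁ = 0
    · have hc2 : c₂ ≠ 0 := fun hh => hc ⟨hc1, hh⟩
      rw [hB, hA, hCc, hD, hc1] at h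
      have h3 : ω ^ 3 * q ^ 2 * c₂ ^ 6 = 0 := by linear_combination h
      rw [hω3, one_mul] at h3
      simp [mul_eq_zero, hq0, hc2, pow_eq_zero_iff] at h3
    · by_cases hc2 : c₂ = 0
      · rw [hB, hA, hCc, hD, hc2] at h
        have h3 : ω ^ 3 * c₁ ^ 6 = 0 := by linear_combination h
        rw [hω3, one_mul] at h3
        simp [pow_eq_zero_iff, hc1] at h3
      · have h5 : algebraMap K L (A * D - B * Cc) = (0 : L) := by rw [h, map_zero]
        rw [map_sub, map_mul, map_mul] at h5
        have h4 : (algebraMap K L Cc * x + algebraMap K L D)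
            * (algebraMap K L Cc * σ x - algebraMap K L A) = 0 := by
          linear_combination algebraMap K L Cc * hmain - h5
        rcases mul_eq_zero.mp h4 with h6 | h6
        · exact hden h6
        · have h7 : algebraMap K L (Cc * c₀ - A) + algebraMap K L (Cc * (ω * c₁)) * u
              + algebraMap K L (Cc * (ω ^ 2 * c₂)) * u ^ 2 = 0 := by
            simp only [map_sub, map_mul, map_add, map_pow]
            linear_combination h6 - algebraMap K L Cc * hσx
          obtain ⟨-, h8, -⟩ := hli _ _ _ h7
          rw [hCc] at h8
          simp [mul_eq_zero, homega, hωne0, hc1, hc2] at h8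
  refine ⟨A, B, Cc, D, hdet, hden, ?_⟩
  rw [eq_div_iff hden]
  linear_combination hmain
end

section
/- With notation as above, the map ψ sending f_{a,b,c,d} to F_{a,b,c,d} is a group homomorphism: composing two Möbius transformations over K = k(x₀/x₁) corresponds to composing the associated birational maps of ℙ², i.e., F_{a,b,c,d} ∘ F_{a',b',c',d'} = F_{a'',b'',c'',d''} (as rational maps) where [[a'',b''],[c'',d'']] = [[a,b],[c,d]]·[[a',b'],[c',d']]. -/
/-- The de Jonquières rational map `F_{a,b,c,d} : ℙ² ⇢ ℙ²`,
`(x₀ : x₁ : x₂) ↦ ((c x₂ + d)x₀ : (c x₂ + d)x₁ : a x₂ + b)`, on homogeneous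
coordinate vectors. -/
noncomputable def jonqMap {k : Type*} [Field k] (a b c d : MvPolynomial (Fin 2) k)
    (v : Fin 3 → k) : Fin 3 → k :=
  ![(MvPolynomial.eval ![v 0, v 1] c * v 2 + MvPolynomial.eval ![v 0, v 1] d) * v 0,
    (MvPolynomial.eval ![v 0, v 1] c * v 2 + MvPolynomial.eval ![v 0, v 1] d) * v 1,
    MvPolynomial.eval ![v 0, v 1] a * v 2 + MvPolynomial.eval ![v 0, v 1] b]

open MvPolynomial in
/-- Evaluating a homogeneous polynomial at a scaled point pulls out the scalar
to the power of the degree. -/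
lemma eval_smul_of_isHomogeneous {k : Type*} [CommSemiring k] {σ : Type*}
    {φ : MvPolynomial σ k} {n : ℕ} (h : φ.IsHomogeneous n) (t : k) (x : σ → k) :
    MvPolynomial.eval (t • x) φ = t ^ n * MvPolynomial.eval x φ := by
  rw [eval_eq, eval_eq, Finset.mul_sum]
  refine Finset.sum_congr rfl fun d hd => ?_
  have hdeg : ∑ i ∈ d.support, d i = n := by
    have := h (MvPolynomial.mem_support_iff.mp hd)
    simpa [Finsupp.weight_apply, Finsupp.sum] using this
  have : ∏ i ∈ d.support, (t • x) i ^ d i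
      = t ^ n * ∏ i ∈ d.support, x i ^ d i := by
    simp only [Pi.smul_apply, smul_eq_mul, mul_pow, Finset.prod_mul_distrib,
      Finset.prod_pow_eq_pow_sum, hdeg]
  rw [this]; ring

/-- part of Theorem C (iii) of Pan–Simis. The assignment
`f_{a,b,c,d} ↦ F_{a,b,c,d}` is a group homomorphism: the composite
`F_{a,b,c,d} ∘ F_{a',b',c',d'}` equals, as a rational map (i.e. up to the nonzero
scalar factor `(c' x₂ + d')^{e+1}` on homogeneous coordinates), the map
`F_{a'',b'',c'',d''}` where `[[a'',b''],[c'',d'']] = [[a,b],[c,d]]·[[a',b'],[c',d']]`. -/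
theorem stmt7 {k : Type*} [Field k] (e e' : ℕ) (a b c d a' b' c' d' : MvPolynomial (Fin 2) k)
    (ha : a.IsHomogeneous (e + 1)) (hb : b.IsHomogeneous (e + 2))
    (hc : c.IsHomogeneous e) (hd : d.IsHomogeneous (e + 1))
    (ha' : a'.IsHomogeneous (e' + 1)) (hb' : b'.IsHomogeneous (e' + 2))
    (hc' : c'.IsHomogeneous e') (hd' : d'.IsHomogeneous (e' + 1))
    (hdet : a * d - b * c ≠ 0) (hdet' : a' * d' - b' * c' ≠ 0) :
    ∀ v : Fin 3 → k,
      jonqMap a b c d (jonqMap a' b' c' d' v) =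
        ((MvPolynomial.eval ![v 0, v 1] c' * v 2 + MvPolynomial.eval ![v 0, v 1] d') ^ (e + 1))
          • jonqMap (a * a' + b * c') (a * b' + b * d')
              (c * a' + d * c') (c * b' + d * d') v := by
  intro v
  obtain ⟨x, hx⟩ : ∃ x : Fin 2 → k, x = ![v 0, v 1] := ⟨_, rfl⟩
  obtain ⟨t, ht⟩ : ∃ t : k, t = MvPolynomial.eval x c' * v 2 + MvPolynomial.eval x d' :=
    ⟨_, rfl⟩
  have hw : jonqMap a' b' c' d' v
      = ![t * v 0, t * v 1, MvPolynomial.eval x a' * v 2 + MvPolynomial.eval x b'] := by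
    funext i
    fin_cases i <;> simp only [jonqMap, Matrix.cons_val_zero, Matrix.cons_val_one,
      Matrix.head_cons, Matrix.cons_val_two, Matrix.tail_cons, Fin.isValue, ht, hx] <;>
      first | rfl | ring
  have key : ![t * v 0, t * v 1] = t • x := by
    funext i
    fin_cases i <;> simp [hx]
  have hA := eval_smul_of_isHomogeneous ha t x
  have hB := eval_smul_of_isHomogeneous hb t x
  have hC := eval_smul_of_isHomogeneous hc t x
  have hD := eval_smul_of_isHomogeneous hd t x
  rw [hw]
  simp only [jonqMap, Matrix.cons_val_zero, Matrix.cons_val_one, Matrix.head_cons,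
    Matrix.cons_val_two, Matrix.tail_cons, Fin.isValue, key, hA, hB, hC, hD,
    map_add, map_mul, ← hx, Matrix.smul_cons, smul_eq_mul, Matrix.smul_empty]
  subst ht
  refine congrArg₂ _ ?_ (congrArg₂ _ ?_ (congrArg₂ _ ?_ rfl)) <;> ring
end

section
/- Let C ⊂ ℙ²(ℂ) be the quartic curve (X+Y)³Z − X³Y = 0 and let σ be the map (X:Y:Z) ↦ (XY : Y((ω−1)X + ωY) : Z((ω−1)X + ωY)), where ω is a primitive cube root of unity. Then σ maps C to itself (as a rational map): whenever (X:Y:Z) ∈ C and σ is defined at it, σ(X:Y:Z) ∈ C. Moreover σ∘σ∘σ is the identity as a rational map on C. -/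
/-- Example 2, Claim 2 of the paper. The rational map
`σ : (X:Y:Z) ↦ (XY : Y((ω−1)X + ωY) : Z((ω−1)X + ωY))`, `ω` a primitive cube root of
unity, maps the quartic `C : (X+Y)³Z − X³Y = 0` to itself, and `σ∘σ∘σ` is the identity
as a rational map on `C`. -/
theorem stmt12 (ω : ℂ) (hω : IsPrimitiveRoot ω 3) :
    let sig : (Fin 3 → ℂ) → (Fin 3 → ℂ) := fun v =>
      ![v 0 * v 1, v 1 * ((ω - 1) * v 0 + ω * v 1), v 2 * ((ω - 1) * v 0 + ω * v 1)]
    let onC : (Fin 3 → ℂ) → Prop := fun v => (v 0 + v 1) ^ 3 * v 2 - v 0 ^ 3 * v 1 = 0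
    (∀ v : Fin 3 → ℂ, v ≠ 0 → onC v → sig v ≠ 0 → onC (sig v)) ∧
    (∀ v : Fin 3 → ℂ, v ≠ 0 → onC v → sig v ≠ 0 → sig (sig v) ≠ 0 →
      sig (sig (sig v)) ≠ 0 →
      ∃ lam : ℂ, lam ≠ 0 ∧ sig (sig (sig v)) = lam • v) := by
  intro sig onC
  have hω3 : ω ^ 3 = 1 := hω.pow_eq_one
  constructor
  · intro v _ hC _
    have hC' : (v 0 + v 1) ^ 3 * v 2 - v 0 ^ 3 * v 1 = 0 := hC
    show (v 0 * v 1 + v 1 * ((ω - 1) * v 0 + ω * v 1)) ^ 3 *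
        (v 2 * ((ω - 1) * v 0 + ω * v 1)) -
        (v 0 * v 1) ^ 3 * (v 1 * ((ω - 1) * v 0 + ω * v 1)) = 0
    linear_combination (v 1 ^ 3 * ((ω - 1) * v 0 + ω * v 1)) * hC' +
      (v 1 ^ 3 * ((ω - 1) * v 0 + ω * v 1) * (v 0 + v 1) ^ 3 * v 2) * hω3
  · intro v _ _ _ _ h3
    set lam : ℂ := v 1 ^ 4 * ((ω - 1) * v 0 + ω * v 1) ^ 2 *
      ((ω ^ 2 - 1) * v 0 + ω ^ 2 * v 1) with hlam
    have heq : sig (sig (sig v)) = lam • v := by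
      funext i
      fin_cases i
      · show (v 0 * v 1 * (v 1 * ((ω - 1) * v 0 + ω * v 1))) *
            ((v 1 * ((ω - 1) * v 0 + ω * v 1)) *
              ((ω - 1) * (v 0 * v 1) + ω * (v 1 * ((ω - 1) * v 0 + ω * v 1)))) =
          lam * v 0
        rw [hlam]; ring
      · show ((v 1 * ((ω - 1) * v 0 + ω * v 1)) *
            ((ω - 1) * (v 0 * v 1) + ω * (v 1 * ((ω - 1) * v 0 + ω * v 1)))) *
            ((ω - 1) * (v 0 * v 1 * (v 1 * ((ω - 1) * v 0 + ω * v 1))) +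
             ω * ((v 1 * ((ω - 1) * v 0 + ω * v 1)) *
              ((ω - 1) * (v 0 * v 1) + ω * (v 1 * ((ω - 1) * v 0 + ω * v 1))))) =
          lam * v 1
        rw [hlam]
        linear_combination (v 1 ^ 4 * ((ω - 1) * v 0 + ω * v 1) ^ 2 *
          ((ω ^ 2 - 1) * v 0 + ω ^ 2 * v 1) * (v 0 + v 1)) * hω3
      · show ((v 2 * ((ω - 1) * v 0 + ω * v 1)) *
            ((ω - 1) * (v 0 * v 1) + ω * (v 1 * ((ω - 1) * v 0 + ω * v 1)))) *
            ((ω - 1) * (v 0 * v 1 * (v 1 * ((ω - 1) * v 0 + ω * v 1))) +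
             ω * ((v 1 * ((ω - 1) * v 0 + ω * v 1)) *
              ((ω - 1) * (v 0 * v 1) + ω * (v 1 * ((ω - 1) * v 0 + ω * v 1))))) =
          lam * v 2
        rw [hlam]
        linear_combination (v 1 ^ 3 * v 2 * ((ω - 1) * v 0 + ω * v 1) ^ 2 *
          ((ω ^ 2 - 1) * v 0 + ω ^ 2 * v 1) * (v 0 + v 1)) * hω3
    refine ⟨lam, ?_, heq⟩
    intro h0
    exact h3 (by rw [heq, h0, zero_smul])
end
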